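/- arXiv:1802.03889 — 2 statements merged into one kernel-verified Lean document; each statement's English description precedes it below -/
import Mathlib

section
/- Let A be a real symmetric L×L matrix, and suppose M ∈ R^{L×L} is symmetric with exactly N nonzero eigenvalues all equal to a > 0 (and L - N zero eigenvalues). If λ_N(A) = τ and λ_{N+1}(A) = τ - ϱ with ϱ ≥ 0, then ‖A - M‖_F² ≥ a²/2 - a·ϱ. -/
noncomputable def frobNorm {m l : Type*} [Fintype m] [Fintype l]
    (M : Matrix m l ℝ) : ℝ :=
  Real.sqrt (∑ i, ∑ j, (M i j) ^ 2)

lemma sum_ite_lt_fin {L N : ℕ} (hNL : N ≤ L) (c : ℝ) :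
    ∑ i : Fin L, (if (i : ℕ) < N then c else 0) = N * c := by
  rw [Finset.sum_ite, Finset.sum_const, Finset.sum_const_zero, add_zero]
  have h : (Finset.filter (fun i : Fin L => (i : ℕ) < N) Finset.univ).card = N := by
    rw [Finset.card_filter]
    rw [Fin.sum_univ_eq_sum_range (fun i => if i < N then 1 else 0)]
    rw [← Finset.sum_filter]
    have h2 : Finset.filter (fun i => i < N) (Finset.range L) = Finset.range N := by
      ext i; simp; omega
    simp [h2]
  rw [h]; simp [mul_comm]

lemma conj_mul_conj {L : ℕ} (U B C : Matrix (Fin L) (Fin L) ℝ)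
    (hUtU : U.transpose * U = 1) :
    (U * B * U.transpose) * (U * C * U.transpose) = U * (B * C) * U.transpose := by
  have h : (U * B * U.transpose) * (U * C * U.transpose)
      = U * (B * ((U.transpose * U) * (C * U.transpose))) := by
    simp only [Matrix.mul_assoc]
  rw [h, hUtU, Matrix.one_mul]
  simp only [Matrix.mul_assoc]

lemma trace_conj {L : ℕ} (U X : Matrix (Fin L) (Fin L) ℝ)
    (hUtU : U.transpose * U = 1) :
    Matrix.trace (U * X * U.transpose) = Matrix.trace X := by
  rw [Matrix.mul_assoc, Matrix.trace_mul_comm, Matrix.mul_assoc, hUtU, Matrix.mul_one]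

lemma sum_sq_eq_trace {L : ℕ} (B : Matrix (Fin L) (Fin L) ℝ) (hB : B.IsSymm) :
    ∑ i : Fin L, ∑ j : Fin L, B i j ^ 2 = Matrix.trace (B * B) := by
  simp only [Matrix.trace, Matrix.mul_apply, Matrix.diag]
  refine Finset.sum_congr rfl fun i _ => Finset.sum_congr rfl fun j _ => ?_
  rw [hB.apply i j, sq]

/-- Wielandt–Hoffman type lower bound. -/
theorem frob_dist_to_rank_N_scaled_projections {L N : ℕ}
    (hN1 : 1 ≤ N) (hNL : N < L)
    (A M : Matrix (Fin L) (Fin L) ℝ) (hA : A.IsSymm) (hM : M.IsSymm)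
    (a τ ϱ : ℝ) (ha : 0 < a) (hϱ : 0 ≤ ϱ)
    (U : Matrix (Fin L) (Fin L) ℝ) (hU : U * U.transpose = 1)
    (μA : Fin L → ℝ) (hμA : Antitone μA)
    (hAdiag : A = U * Matrix.diagonal μA * U.transpose)
    (hτ : μA ⟨N - 1, lt_trans (by omega) hNL⟩ = τ)
    (hτϱ : μA ⟨N, hNL⟩ = τ - ϱ)
    (V : Matrix (Fin L) (Fin L) ℝ) (hV : V * V.transpose = 1)
    (μM : Fin L → ℝ)
    (hμM : ∀ i : Fin L, μM i = if (i : ℕ) < N then a else 0)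
    (hMdiag : M = V * Matrix.diagonal μM * V.transpose) :
    a ^ 2 / 2 - a * ϱ ≤ frobNorm (A - M) ^ 2 := by
  classical
  have hUtU : U.transpose * U = 1 := mul_eq_one_comm.mp hU
  have hVtV : V.transpose * V = 1 := mul_eq_one_comm.mp hV
  set W : Matrix (Fin L) (Fin L) ℝ := U.transpose * V with hWdef
  have hWWt : W * W.transpose = 1 := by
    have h1 : W * W.transpose = U.transpose * (V * V.transpose) * U := by
      simp [hWdef, Matrix.transpose_mul, Matrix.mul_assoc]
    rw [h1, hV, Matrix.mul_one, hUtU]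
  have hWtW : W.transpose * W = 1 := mul_eq_one_comm.mp hWWt
  have hrow : ∀ i, ∑ j : Fin L, (W i j) ^ 2 = 1 := by
    intro i
    have h := congrFun (congrFun hWWt i) i
    simpa [Matrix.mul_apply, Matrix.one_apply, sq] using h
  have hcol : ∀ j, ∑ i : Fin L, (W i j) ^ 2 = 1 := by
    intro j
    have h := congrFun (congrFun hWtW j) j
    simpa [Matrix.mul_apply, Matrix.one_apply, sq] using h
  set q : Fin L → ℝ := fun i => ∑ j : Fin L, (if (j : ℕ) < N then (W i j) ^ 2 else 0)
    with hqdef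
  have hq0 : ∀ i, 0 ≤ q i := by
    intro i
    refine Finset.sum_nonneg fun j _ => ?_
    split <;> positivity
  have hq1 : ∀ i, q i ≤ 1 := by
    intro i
    rw [show (1:ℝ) = ∑ j : Fin L, (W i j) ^ 2 from (hrow i).symm]
    refine Finset.sum_le_sum fun j _ => ?_
    split
    · exact le_refl _
    · positivity
  have hqsum : ∑ i : Fin L, q i = (N : ℝ) := by
    rw [hqdef]
    rw [Finset.sum_comm]
    have h : ∀ j : Fin L, ∑ i : Fin L, (if (j : ℕ) < N then (W i j) ^ 2 else 0)
        = (if (j : ℕ) < N then (1 : ℝ) else 0) := by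
      intro j
      split
      · exact hcol j
      · simp
    rw [Finset.sum_congr rfl fun j _ => h j, sum_ite_lt_fin hNL.le, mul_one]
  -- trace identities
  have htrA2 : ∑ i : Fin L, ∑ j : Fin L, (A i j) ^ 2 = ∑ i : Fin L, (μA i) ^ 2 := by
    rw [sum_sq_eq_trace A hA, hAdiag, conj_mul_conj _ _ _ hUtU, trace_conj _ _ hUtU,
      Matrix.diagonal_mul_diagonal, Matrix.trace_diagonal]
    simp [sq]
  have htrM2 : ∑ i : Fin L, ∑ j : Fin L, (M i j) ^ 2 = (N : ℝ) * a ^ 2 := by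
    rw [sum_sq_eq_trace M hM, hMdiag, conj_mul_conj _ _ _ hVtV, trace_conj _ _ hVtV,
      Matrix.diagonal_mul_diagonal, Matrix.trace_diagonal]
    rw [← sum_ite_lt_fin (N := N) hNL.le (a ^ 2)]
    refine Finset.sum_congr rfl fun i _ => ?_
    rw [hμM i]
    by_cases h' : (i : ℕ) < N <;> simp [h', sq]
  have htrAM : ∑ i : Fin L, ∑ j : Fin L, A i j * M i j = a * ∑ i : Fin L, μA i * q i := by
    have hVUW : V = U * W := by
      rw [hWdef, ← Matrix.mul_assoc, hU, Matrix.one_mul]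
    have hM2 : M = U * (W * Matrix.diagonal μM * W.transpose) * U.transpose := by
      rw [hMdiag, hVUW, Matrix.transpose_mul]
      simp only [Matrix.mul_assoc]
    have h1 : ∑ i : Fin L, ∑ j : Fin L, A i j * M i j = Matrix.trace (A * M) := by
      simp only [Matrix.trace, Matrix.mul_apply, Matrix.diag]
      refine Finset.sum_congr rfl fun i _ => Finset.sum_congr rfl fun j _ => ?_
      rw [hM.apply i j]
    rw [h1, hAdiag, hM2, conj_mul_conj _ _ _ hUtU, trace_conj _ _ hUtU]
    have h2 : Matrix.trace (Matrix.diagonal μA * (W * Matrix.diagonal μM * W.transpose))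
        = ∑ i : Fin L, μA i * ∑ j : Fin L, (W i j * μM j) * W i j := by
      simp only [Matrix.trace, Matrix.diag]
      refine Finset.sum_congr rfl fun i _ => ?_
      rw [Matrix.diagonal_mul]
      congr 1
      rw [Matrix.mul_apply]
      refine Finset.sum_congr rfl fun j _ => ?_
      rw [Matrix.mul_diagonal, Matrix.transpose_apply]
    have hinner : ∀ i : Fin L, ∑ j : Fin L, (W i j * μM j) * W i j = a * q i := by
      intro i
      rw [hqdef]
      dsimp only
      rw [Finset.mul_sum]
      refine Finset.sum_congr rfl fun j _ => ?_
      rw [hμM j]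
      by_cases h' : (j : ℕ) < N <;> simp [h'] <;> ring
    rw [h2, Finset.sum_congr rfl fun i _ => by rw [hinner i], Finset.mul_sum]
    exact Finset.sum_congr rfl fun i _ => by ring
  -- Ky Fan type inequality
  have hkey : ∑ i : Fin L, μA i * q i
      ≤ ∑ i : Fin L, (if (i : ℕ) < N then μA i else 0) := by
    have hterm : ∀ i : Fin L,
        (μA i - τ) * (q i - (if (i : ℕ) < N then 1 else 0)) ≤ 0 := by
      intro i
      by_cases h : (i : ℕ) < N
      · have h1 : τ ≤ μA i := by
          rw [← hτ]
          exact hμA (by simp [Fin.le_def]; omega)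
        have h2 : q i - 1 ≤ 0 := by linarith [hq1 i]
        simp only [h, if_pos]
        exact mul_nonpos_of_nonneg_of_nonpos (by linarith) h2
      · have h1 : μA i ≤ τ := by
          have h3 : μA i ≤ μA ⟨N, hNL⟩ := hμA (by simp [Fin.le_def]; omega)
          rw [hτϱ] at h3; linarith
        simp only [h, if_neg, not_false_iff]
        rw [sub_zero]
        exact mul_nonpos_of_nonpos_of_nonneg (by linarith) (hq0 i)
    have hsum : ∑ i : Fin L, (μA i - τ) * (q i - (if (i : ℕ) < N then 1 else 0)) ≤ 0 :=
      Finset.sum_nonpos fun i _ => hterm i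
    have hexp : ∑ i : Fin L, (μA i - τ) * (q i - (if (i : ℕ) < N then 1 else 0))
        = (∑ i : Fin L, μA i * q i) - (∑ i : Fin L, (if (i : ℕ) < N then μA i else 0))
          - τ * (∑ i : Fin L, q i)
          + τ * (∑ i : Fin L, (if (i : ℕ) < N then (1:ℝ) else 0)) := by
      have h : ∀ i : Fin L, (μA i - τ) * (q i - (if (i : ℕ) < N then 1 else 0))
          = μA i * q i - (if (i : ℕ) < N then μA i else 0) - τ * q i
            + τ * (if (i : ℕ) < N then (1:ℝ) else 0) := by
        intro i; by_cases h' : (i : ℕ) < N <;> simp [h'] <;> ring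
      rw [Finset.sum_congr rfl fun i _ => h i]
      rw [Finset.sum_add_distrib, Finset.sum_sub_distrib, Finset.sum_sub_distrib,
        ← Finset.mul_sum, ← Finset.mul_sum]
    rw [hexp, hqsum, sum_ite_lt_fin hNL.le, mul_one] at hsum
    linarith
  -- assemble
  have hT : frobNorm (A - M) ^ 2 = ∑ i : Fin L, ∑ j : Fin L, (A i j - M i j) ^ 2 := by
    rw [frobNorm, Real.sq_sqrt]
    · rfl
    · exact Finset.sum_nonneg fun i _ => Finset.sum_nonneg fun j _ => by positivity
  have hTexp : ∑ i : Fin L, ∑ j : Fin L, (A i j - M i j) ^ 2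
      = (∑ i : Fin L, ∑ j : Fin L, (A i j) ^ 2) + (∑ i : Fin L, ∑ j : Fin L, (M i j) ^ 2)
        - 2 * ∑ i : Fin L, ∑ j : Fin L, A i j * M i j := by
    calc ∑ i : Fin L, ∑ j : Fin L, (A i j - M i j) ^ 2
        = ∑ i : Fin L, ∑ j : Fin L,
            ((A i j) ^ 2 + (M i j) ^ 2 - 2 * (A i j * M i j)) := by
          refine Finset.sum_congr rfl fun i _ => Finset.sum_congr rfl fun j _ => by ring
      _ = _ := by
          simp only [Finset.sum_sub_distrib, Finset.sum_add_distrib, ← Finset.mul_sum]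
  -- lower bound on the diagonal expression
  have hid : ∑ i : Fin L, (μA i) ^ 2 + (N : ℝ) * a ^ 2
        - 2 * a * ∑ i : Fin L, (if (i : ℕ) < N then μA i else 0)
      = ∑ i : Fin L, (if (i : ℕ) < N then (μA i - a) ^ 2 else (μA i) ^ 2) := by
    have h : ∀ i : Fin L, (if (i : ℕ) < N then (μA i - a) ^ 2 else (μA i) ^ 2)
        = (μA i) ^ 2 + (if (i : ℕ) < N then a ^ 2 else 0)
          - 2 * a * (if (i : ℕ) < N then μA i else 0) := by
      intro i; by_cases h' : (i : ℕ) < N <;> simp [h'] <;> ring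
    rw [Finset.sum_congr rfl fun i _ => h i]
    rw [Finset.sum_sub_distrib, Finset.sum_add_distrib, ← Finset.mul_sum,
      sum_ite_lt_fin hNL.le]
  have hlow : (τ - a) ^ 2 + (τ - ϱ) ^ 2
      ≤ ∑ i : Fin L, (if (i : ℕ) < N then (μA i - a) ^ 2 else (μA i) ^ 2) := by
    have hne : (⟨N - 1, lt_trans (by omega) hNL⟩ : Fin L) ≠ ⟨N, hNL⟩ := by
      simp [Fin.ext_iff]; omega
    calc (τ - a) ^ 2 + (τ - ϱ) ^ 2
        = ∑ i ∈ ({⟨N - 1, lt_trans (by omega) hNL⟩, ⟨N, hNL⟩} : Finset (Fin L)),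
            (if (i : ℕ) < N then (μA i - a) ^ 2 else (μA i) ^ 2) := by
          rw [Finset.sum_pair hne]
          have e1 : ((⟨N - 1, lt_trans (by omega) hNL⟩ : Fin L) : ℕ) < N := by simp; omega
          have e2 : ¬ (((⟨N, hNL⟩ : Fin L) : ℕ) < N) := by simp
          rw [if_pos e1, if_neg e2, hτ, hτϱ]
      _ ≤ _ := by
          refine Finset.sum_le_sum_of_subset_of_nonneg (Finset.subset_univ _)
            fun i _ _ => ?_
          split <;> positivity
  have hfinal : a ^ 2 / 2 - a * ϱ ≤ (τ - a) ^ 2 + (τ - ϱ) ^ 2 := by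
    nlinarith [sq_nonneg (2 * τ - a - ϱ), sq_nonneg ϱ]
  rw [hT, hTexp, htrA2, htrM2, htrAM]
  nlinarith [hkey, ha.le, hid, hlow, hfinal]
end

section
/- Let X and Y be nonempty closed convex subsets of R^n with a common point x̄ and r > 0 such that the closed ball B(x̄, r) is contained in X ∩ Y. Then for all x ∈ X and y ∈ Y, dist((x,y), L) ≤ (1 + (‖x - x̄‖ + ‖y - x̄‖)/r)·‖x - y‖, where L = {(u,u) : u ∈ X ∩ Y} ⊆ R^n × R^n. -/
/-!
Write `d = ‖x - y‖` and `t = d / (d + 2r)`. The witness `u = (r x + r y + d x̄) / (d + 2r)` lies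
within `t r` of `(1 - t) x + t x̄`, and by convexity the homothety with centre `x` and ratio `t`
maps `B(x̄, r)` into `X`; hence `u ∈ X`, and symmetrically `u ∈ Y`. The distance from `(x, y)` to
`(u, u)` is at most `‖x - u‖ + ‖y - u‖ ≤ d (2r + ‖x - x̄‖ + ‖y - x̄‖) / (d + 2r)`, which is at most
the claimed bound.
-/

open Metric

namespace WithLp

variable {p : ENNReal} [Fact (1 ≤ p)] {α β : Type*} [SeminormedAddCommGroup α]
  [SeminormedAddCommGroup β]

theorem prod_dist_toLp_le_add (x₁ x₂ : α) (y₁ y₂ : β) :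
    dist (toLp p (x₁, y₁)) (toLp p (x₂, y₂)) ≤ dist x₁ x₂ + dist y₁ y₂ := by
  have hsplit : toLp p (x₁, y₁) - toLp p (x₂, y₂)
      = toLp p (x₁ - x₂, 0) + toLp p (0, y₁ - y₂) := by
    rw [← toLp_sub, ← toLp_add, Prod.mk_sub_mk, Prod.mk_add_mk, add_zero, zero_add]
  rw [dist_eq_norm, hsplit, dist_eq_norm, dist_eq_norm, ← norm_toLp_fst p α β,
    ← norm_toLp_snd p α β]
  exact norm_add_le _ _

end WithLp

section
variable {E : Type*} [NormedAddCommGroup E] [NormedSpace ℝ E]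

theorem Convex.closedBall_combo_subset {C : Set E} {c x : E} {r t : ℝ} (hC : Convex ℝ C)
    (hball : closedBall c r ⊆ C) (hx : x ∈ C) (ht₀ : 0 ≤ t) (ht₁ : t ≤ 1) :
    closedBall ((1 - t) • x + t • c) (t * r) ⊆ C := by
  intro z hz
  rcases ht₀.eq_or_lt with rfl | ht
  · rw [zero_mul, closedBall_zero, Set.mem_singleton_iff] at hz
    simpa [hz] using hx
  set w := c + t⁻¹ • (z - ((1 - t) • x + t • c))
  have hw : w ∈ closedBall c r := by
    rw [mem_closedBall, dist_eq_norm, add_sub_cancel_left, norm_smul,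
      Real.norm_of_nonneg (inv_nonneg.2 ht₀), ← dist_eq_norm, inv_mul_le_iff₀ ht]
    exact hz
  have hz : z = (1 - t) • x + t • w := by
    simp only [w, smul_add, smul_smul, mul_inv_cancel₀ ht.ne', one_smul]
    abel
  exact hz ▸ hC hx (hball hw) (sub_nonneg.2 ht₁) ht₀ (sub_add_cancel 1 t)

noncomputable def pullToward (c : E) (r : ℝ) (x y : E) : E :=
  (‖x - y‖ + 2 * r)⁻¹ • (r • x + r • y + ‖x - y‖ • c)

theorem pullToward_comm (c : E) (r : ℝ) (x y : E) : pullToward c r x y = pullToward c r y x := by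
  rw [pullToward, pullToward, norm_sub_rev, add_comm (r • x)]

variable {c x y : E} {r : ℝ}

theorem sub_pullToward (hr : 0 < r) (x y : E) :
    x - pullToward c r x y = (‖x - y‖ + 2 * r)⁻¹ • (r • (x - y) + ‖x - y‖ • (x - c)) := by
  have hs : ‖x - y‖ + 2 * r ≠ 0 := by positivity
  rw [pullToward, eq_inv_smul_iff₀ hs, smul_sub, smul_inv_smul₀ hs]
  module

theorem pullToward_mem {C : Set E} (hC : Convex ℝ C) (hball : closedBall c r ⊆ C) (hr : 0 < r)
    (hx : x ∈ C) : pullToward c r x y ∈ C := by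
  set d := ‖x - y‖
  have hs : 0 < d + 2 * r := by positivity
  set t := d / (d + 2 * r)
  refine hC.closedBall_combo_subset (t := t) hball hx (by positivity)
    ((div_le_one hs).2 (by linarith [hr])) ?_
  have hoffset : pullToward c r x y - ((1 - t) • x + t • c) = (r / (d + 2 * r)) • (y - x) := by
    simp only [pullToward, t, d]
    match_scalars <;> field_simp <;> ring
  rw [mem_closedBall, dist_eq_norm, hoffset, norm_smul, Real.norm_of_nonneg (by positivity),
    norm_sub_rev]
  exact (by ring : _ = _).le

theorem norm_sub_pullToward_le (hr : 0 < r) (x y : E) :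
    ‖x - pullToward c r x y‖ ≤ (r * ‖x - y‖ + ‖x - y‖ * ‖x - c‖) / (‖x - y‖ + 2 * r) := by
  rw [sub_pullToward hr, norm_smul, Real.norm_of_nonneg (by positivity), inv_mul_eq_div]
  gcongr
  refine (norm_add_le _ _).trans ?_
  rw [norm_smul, norm_smul, Real.norm_of_nonneg hr.le, norm_norm]

theorem norm_sub_pullToward_add_le (hr : 0 < r) (x y : E) :
    ‖x - pullToward c r x y‖ + ‖y - pullToward c r x y‖
      ≤ (1 + (‖x - c‖ + ‖y - c‖) / r) * ‖x - y‖ := by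
  have hxu := norm_sub_pullToward_le (c := c) hr x y
  have hyu := norm_sub_pullToward_le (c := c) hr y x
  rw [← pullToward_comm, norm_sub_rev y x] at hyu
  refine (add_le_add hxu hyu).trans ?_
  have hs : 0 < ‖x - y‖ + 2 * r := by positivity
  rw [← add_div, div_le_iff₀ hs]
  field_simp
  have hab : 0 ≤ ‖x - c‖ + ‖y - c‖ := by positivity
  nlinarith [mul_nonneg (mul_nonneg hab hr.le) (norm_nonneg (x - y)),
    mul_nonneg (sq_nonneg ‖x - y‖) (add_nonneg hr.le hab)]

end

open Metric in
theorem error_bound_convex_intersection_general {n : ℕ}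
    (X Y : Set (EuclideanSpace ℝ (Fin n)))
    (hXconv : Convex ℝ X) (hYconv : Convex ℝ Y)
    (xbar : EuclideanSpace ℝ (Fin n)) (r : ℝ) (hr : 0 < r)
    (hball : closedBall xbar r ⊆ X ∩ Y)
    (L : Set (WithLp 2 (EuclideanSpace ℝ (Fin n) × EuclideanSpace ℝ (Fin n))))
    (hL : L = {p | ∃ u ∈ X ∩ Y,
      p = (WithLp.equiv 2 (EuclideanSpace ℝ (Fin n) × EuclideanSpace ℝ (Fin n))).symm (u, u)}) :
    ∀ x ∈ X, ∀ y ∈ Y,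
      infDist ((WithLp.equiv 2 (EuclideanSpace ℝ (Fin n) × EuclideanSpace ℝ (Fin n))).symm (x, y)) L
        ≤ (1 + (‖x - xbar‖ + ‖y - xbar‖) / r) * ‖x - y‖ := by
  intro x hx y hy
  set u := pullToward xbar r x y with hu
  have huX : u ∈ X := pullToward_mem hXconv (hball.trans Set.inter_subset_left) hr hx
  have huY : u ∈ Y := by
    rw [hu, pullToward_comm]
    exact pullToward_mem hYconv (hball.trans Set.inter_subset_right) hr hy
  have hmem : WithLp.toLp 2 (u, u) ∈ L := hL ▸ ⟨u, ⟨huX, huY⟩, rfl⟩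
  calc infDist (WithLp.toLp 2 (x, y)) _ ≤ dist (WithLp.toLp 2 (x, y)) (WithLp.toLp 2 (u, u)) :=
        infDist_le_dist_of_mem hmem
    _ ≤ ‖x - u‖ + ‖y - u‖ := by
        simpa only [dist_eq_norm x, dist_eq_norm y] using WithLp.prod_dist_toLp_le_add x u y u
    _ ≤ _ := norm_sub_pullToward_add_le hr x y

open Metric in
/-- Error bound for the alternating-projections objective: the distance (in the
Euclidean norm on the product) from `(x, y)` to the diagonal embedding `L` of
`X ∩ Y` is bounded by `(1 + (‖x - x̄‖ + ‖y - x̄‖)/r) · ‖x - y‖`. -/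
theorem error_bound_convex_intersection {n : ℕ}
    (X Y : Set (EuclideanSpace ℝ (Fin n)))
    (hXne : X.Nonempty) (hYne : Y.Nonempty)
    (hXc : IsClosed X) (hYc : IsClosed Y)
    (hXconv : Convex ℝ X) (hYconv : Convex ℝ Y)
    (xbar : EuclideanSpace ℝ (Fin n)) (r : ℝ) (hr : 0 < r)
    (hball : closedBall xbar r ⊆ X ∩ Y)
    (L : Set (WithLp 2 (EuclideanSpace ℝ (Fin n) × EuclideanSpace ℝ (Fin n))))
    (hL : L = {p | ∃ u ∈ X ∩ Y,
      p = (WithLp.equiv 2 (EuclideanSpace ℝ (Fin n) × EuclideanSpace ℝ (Fin n))).symm (u, u)}) :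
    ∀ x ∈ X, ∀ y ∈ Y,
      infDist ((WithLp.equiv 2 (EuclideanSpace ℝ (Fin n) × EuclideanSpace ℝ (Fin n))).symm (x, y)) L
        ≤ (1 + (‖x - xbar‖ + ‖y - xbar‖) / r) * ‖x - y‖ :=
  error_bound_convex_intersection_general X Y hXconv hYconv xbar r hr hball L hL
end
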